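/- arXiv:2205.08869 — 5 statements merged into one kernel-verified Lean document; each statement's English description precedes it below -/
import Mathlib

section
/- Let η be a tnn update over ℤ^d and let φ be a propositional formula built with ∧ and ∨ from atoms p < q with p, q ∈ ℤ[x1,...,xd]. Then for every e ∈ ℤ^d there exists s ∈ ℕ such that for all n ≥ s: φ holds at η^n(e) if and only if φ holds at η^s(e). That is, the truth value of the guard stabilizes along every orbit of a tnn update, so the stabilization threshold (the smallest such s) exists. -/
open scoped Classical

noncomputable section

namespace Koat

/-! ### Formulas over polynomial atoms `p < q` -/

inductive Fml (V : Type*) where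
  | lt  : MvPolynomial V ℤ → MvPolynomial V ℤ → Fml V
  | and : Fml V → Fml V → Fml V
  | or  : Fml V → Fml V → Fml V

namespace Fml

variable {V : Type*}

/-- A formula holds in a state `σ : V → ℤ`. -/
def holds (σ : V → ℤ) : Fml V → Prop
  | .lt p q  => MvPolynomial.eval σ p < MvPolynomial.eval σ q
  | .and f g => holds σ f ∧ holds σ g
  | .or f g  => holds σ f ∨ holds σ g

/-- Applying an update `η` to a formula (substituting `η v` for each variable `v`). -/
def subst (η : V → MvPolynomial V ℤ) : Fml V → Fml V
  | .lt p q  => .lt (MvPolynomial.bind₁ η p) (MvPolynomial.bind₁ η q)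
  | .and f g => .and (subst η f) (subst η g)
  | .or f g  => .or (subst η f) (subst η g)

/-- The variables occurring in a formula. -/
def vars : Fml V → Finset V
  | .lt p q  => p.vars ∪ q.vars
  | .and f g => vars f ∪ vars g
  | .or f g  => vars f ∪ vars g

/-- The list of atoms `(s₁, s₂)` (meaning `s₁ < s₂`) occurring in a formula. -/
def atoms : Fml V → List (MvPolynomial V ℤ × MvPolynomial V ℤ)
  | .lt p q  => [(p, q)]
  | .and f g => atoms f ++ atoms g
  | .or f g  => atoms f ++ atoms g

end Fml

/-! ### Bounds -/

/-- The set `𝓑` of bounds: built from `ℕ ∪ {ω}`, variables, `+`, `·`, `k^{·}`. -/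
inductive Bnd (V : Type*) where
  | const : ℕ∞ → Bnd V
  | var : V → Bnd V
  | add : Bnd V → Bnd V → Bnd V
  | mul : Bnd V → Bnd V → Bnd V
  | exp : ℕ → Bnd V → Bnd V

/-- `k ^ e` for `e : ℕ∞`. -/
def epow (k : ℕ) (e : ℕ∞) : ℕ∞ := if e = ⊤ then ⊤ else ((k ^ e.toNat : ℕ) : ℕ∞)

namespace Bnd

variable {V : Type*}

/-- Evaluation of a bound in a (non-negative) state, with values in `ℕ ∪ {ω}`. -/
def eval (σ : V → ℕ) : Bnd V → ℕ∞
  | .const c => c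
  | .var v => (σ v : ℕ∞)
  | .add b₁ b₂ => eval σ b₁ + eval σ b₂
  | .mul b₁ b₂ => eval σ b₁ * eval σ b₂
  | .exp k b => epow k (eval σ b)

/-- `b [v / f v | v ∈ PV]`: substitute the bound `f v` for every program variable `v ∈ PV`. -/
def substOn (PV : Set V) (f : V → Bnd V) : Bnd V → Bnd V
  | .const c => .const c
  | .var v => if v ∈ PV then f v else .var v
  | .add b₁ b₂ => .add (substOn PV f b₁) (substOn PV f b₂)
  | .mul b₁ b₂ => .mul (substOn PV f b₁) (substOn PV f b₂)
  | .exp k b => .exp k (substOn PV f b)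

end Bnd

/-- The sum of a list of bounds. -/
def bndSum {V : Type*} (l : List (Bnd V)) : Bnd V := l.foldr Bnd.add (Bnd.const 0)

/-! ### Integer programs -/

/-- A transition `(ℓ, φ, η, ℓ')`. -/
structure Trans (L V : Type*) where
  src : L
  guard : Fml V
  update : V → MvPolynomial V ℤ
  tgt : L

/-- A configuration `(ℓ, σ)`. -/
abbrev Config (L V : Type*) := L × (V → ℤ)

/-- The evaluation step `(ℓ, σ) →_t (ℓ', σ')`: program variables are updated by `t.update`,
temporary variables (those outside `PV`) get arbitrary values. -/
def Step {L V : Type*} (PV : Set V) (t : Trans L V) (c c' : Config L V) : Prop :=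
  c.1 = t.src ∧ c'.1 = t.tgt ∧ t.guard.holds c.2 ∧
    ∀ v ∈ PV, c'.2 v = MvPolynomial.eval c.2 (t.update v)

/-- `→_S`, the union of `→_t` over `t ∈ S`. -/
def StepAny {L V : Type*} (PV : Set V) (S : Finset (Trans L V)) :
    Config L V → Config L V → Prop :=
  fun c c' => ∃ t ∈ S, Step PV t c c'

/-- `k`-fold composition of a relation. -/
def relPow {α : Type*} (R : α → α → Prop) : ℕ → α → α → Prop
  | 0 => Eq
  | n + 1 => Relation.Comp (relPow R n) R

/-- `→*_S ∘ →_t`. -/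
def starThen {L V : Type*} (PV : Set V) (S : Finset (Trans L V)) (t : Trans L V) :
    Config L V → Config L V → Prop :=
  Relation.Comp (Relation.ReflTransGen (StepAny PV S)) (Step PV t)

/-- `|σ|`, the state of absolute values. -/
def absState {V : Type*} (σ : V → ℤ) : V → ℕ := fun v => (σ v).natAbs

/-- `RB` is a global runtime bound for the program `(PV, L, ℓ₀, T)`. -/
def IsGlobalRB {L V : Type*} (PV : Set V) (ℓ₀ : L) (T : Finset (Trans L V))
    (RB : Trans L V → Bnd V) : Prop :=
  ∀ t ∈ T, ∀ σ₀ : V → ℤ,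
    (⨆ k ∈ {k : ℕ | ∃ c' : Config L V, relPow (starThen PV T t) k (ℓ₀, σ₀) c'}, (k : ℕ∞))
      ≤ (RB t).eval (absState σ₀)

/-- `SB` is a size bound for the program `(PV, L, ℓ₀, T)`. -/
def IsSizeBound {L V : Type*} (PV : Set V) (ℓ₀ : L) (T : Finset (Trans L V))
    (SB : Trans L V → V → Bnd V) : Prop :=
  ∀ t ∈ T, ∀ v ∈ PV, ∀ σ₀ : V → ℤ,
    (⨆ s ∈ {s : ℕ | ∃ c' : Config L V, starThen PV T t (ℓ₀, σ₀) c' ∧ s = (c'.2 v).natAbs},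
      (s : ℕ∞)) ≤ (SB t v).eval (absState σ₀)

/-- The entry transitions `E_{T'}`. -/
def entrySet {L V : Type*} (T T' : Finset (Trans L V)) : Set (Trans L V) :=
  {t | t ∈ T ∧ t ∉ T' ∧ ∃ t' ∈ T', t'.src = t.tgt}

/-- `RB` is a local runtime bound for `T'gt` w.r.t. `T'` in the program `(PV, L, ℓ₀, T)`. -/
def IsLocalRB {L V : Type*} (PV : Set V) (ℓ₀ : L) (T T'gt T' : Finset (Trans L V))
    (RB : Trans L V → Bnd V) : Prop :=
  ∀ t ∈ T'gt, ∀ r ∈ entrySet T T', ∀ σ : V → ℤ,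
    (⨆ k ∈ {k : ℕ | ∃ (σ₀ : V → ℤ) (c' : Config L V),
        starThen PV T r (ℓ₀, σ₀) (r.tgt, σ) ∧ relPow (starThen PV T' t) k (r.tgt, σ) c'},
      (k : ℕ∞)) ≤ (RB r).eval (absState σ)

/-- Chaining two transitions: `t₁ ⋆ t₂`. -/
def chain2 {L V : Type*} (t₁ t₂ : Trans L V) : Trans L V :=
  ⟨t₁.src, (t₁.guard).and (t₂.guard.subst t₁.update),
    fun v => MvPolynomial.bind₁ t₁.update (t₂.update v), t₂.tgt⟩

/-- Chaining a (nonempty) list of transitions `t₁ ⋆ ⋯ ⋆ tₙ` (with a default for `[]`). -/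
def chainFold {L V : Type*} (dflt : Trans L V) : List (Trans L V) → Trans L V
  | [] => dflt
  | t :: ts => ts.foldl chain2 t

/-- The composed evaluation relation `→_{t₁} ∘ ⋯ ∘ →_{tₙ}`. -/
def stepsList {L V : Type*} (PV : Set V) : List (Trans L V) → Config L V → Config L V → Prop
  | [] => Eq
  | t :: ts => Relation.Comp (Step PV t) (stepsList PV ts)

/-! ### Twn-loops -/

/-- An update `η` as a function on states `ℤ^d → ℤ^d`. -/
def updFun {d : ℕ} (η : Fin d → MvPolynomial (Fin d) ℤ) (σ : Fin d → ℤ) : Fin d → ℤ :=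
  fun i => MvPolynomial.eval σ (η i)

/-- `η` is triangular weakly non-linear with data `c`, `p`:
`η xᵢ = cᵢ·xᵢ + pᵢ` with `pᵢ ∈ ℤ[x_{i+1},…,x_d]`. -/
def IsTriangular {d : ℕ} (η : Fin d → MvPolynomial (Fin d) ℤ) (c : Fin d → ℤ)
    (p : Fin d → MvPolynomial (Fin d) ℤ) : Prop :=
  ∀ i, η i = MvPolynomial.C (c i) * MvPolynomial.X i + p i ∧ ∀ j ∈ (p i).vars, i < j

/-- Triangular weakly non-linear update. -/
def IsTWN {d : ℕ} (η : Fin d → MvPolynomial (Fin d) ℤ) : Prop :=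
  ∃ c p, IsTriangular η c p

/-- Triangular weakly non-linear update with non-negative coefficients. -/
def IsTNN {d : ℕ} (η : Fin d → MvPolynomial (Fin d) ℤ) : Prop :=
  ∃ c p, IsTriangular η c p ∧ ∀ i, 0 ≤ c i

/-- `(b₁,a₁) >_lex (b₂,a₂)`. -/
def lexGt (b₁ a₁ b₂ a₂ : ℕ) : Prop := b₂ < b₁ ∨ (b₁ = b₂ ∧ a₂ < a₁)

/-- The set of all valid `k`-monotonicity thresholds of `(b₁,a₁)` and `(b₂,a₂)`. -/
def mthSet (k b₁ a₁ b₂ a₂ : ℕ) : Set ℕ :=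
  {n₀ | ∀ n ≥ n₀, k * (n ^ a₂ * b₂ ^ n) < n ^ a₁ * b₁ ^ n}

/-- The `k`-monotonicity threshold of `(b₁,a₁)` and `(b₂,a₂)` (the smallest member of
`mthSet`, when it exists). -/
def mth (k b₁ a₁ b₂ a₂ : ℕ) : ℕ := sInf (mthSet k b₁ a₁ b₂ a₂)

/-- `M_j` as in the paper. -/
def Mdef (b a : ℕ → ℕ) (j : ℕ) : ℕ :=
  if b j = b (j - 1) then 0 else mth 1 (b j) (a j) (b (j - 1)) (a (j - 1) + 1)

/-- `N_j` as in the paper. -/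
def Ndef (b a : ℕ → ℕ) (j : ℕ) : ℕ :=
  if j = 2 then 1
  else if j = 3 then mth 1 (b 2) (a 2) (b 1) (a 1)
  else
    max ((Finset.Icc 1 (j - 3)).sup fun i => mth 1 (b (j - 2)) (a (j - 2)) (b i) (a i))
      (mth (j - 2) (b (j - 1)) (a (j - 1)) (b (j - 2)) (a (j - 2)))

/-- The over-approximation `⊔ {p j | j ∈ s}`: each monomial gets the maximal absolute value
of its coefficients in the `p j`. -/
def sqcupF {d : ℕ} {ι : Type*} (s : Finset ι) (p : ι → MvPolynomial (Fin d) ℤ) :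
    MvPolynomial (Fin d) ℤ :=
  ∑ m ∈ s.biUnion fun j => (p j).support,
    MvPolynomial.monomial m (((s.sup fun j => ((p j).coeff m).natAbs : ℕ) : ℤ))

/-- Normalized poly-exponential expressions, as finite (formal) sums of
`p · n^a · b^n` with `p ∈ ℚ[x₁,…,x_d]`. -/
abbrev NPE (d : ℕ) := List (MvPolynomial (Fin d) ℚ × ℕ × ℕ)

/-- The value of a normalized poly-exponential expression at `(e, n)`. -/
def evalNPE {d : ℕ} (l : NPE d) (e : Fin d → ℤ) (n : ℕ) : ℚ :=
  (l.map fun tr =>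
    MvPolynomial.eval (fun i => (e i : ℚ)) tr.1 * (n : ℚ) ^ tr.2.1 * (tr.2.2 : ℚ) ^ n).sum

/-!
Along an orbit the coordinates satisfy `xᵢ(n + 1) = cᵢ xᵢ(n) + pᵢ(x_{i+1}(n), …, x_d(n))`.
By descending induction on `i`, every coordinate, and then every integer polynomial in the
coordinates, is eventually a poly-exponential `∑ r bⁿ nᵃ` with `b ∈ ℕ`: with `cᵢ ∈ ℕ`, such a
recurrence with poly-exponential forcing term has a poly-exponential solution, found monomial by
monomial by induction on `a`. A poly-exponential eventually has the sign of its
lexicographically largest term `(b, a)`, which dominates all others. Hence every atom `p < q`,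
and so every guard, eventually has a constant truth value.
-/

open Filter Asymptotics

/-- `(b, a) ↦ (n ↦ bⁿ nᵃ)`; the exponent `a` sits in `Multiplicative ℕ` so that multiplying
indices multiplies the functions. -/
def expMonomial : ℕ × Multiplicative ℕ →* (ℕ → ℝ) where
  toFun x n := (x.1 : ℝ) ^ n * (n : ℝ) ^ x.2.toAdd
  map_one' := by ext n; simp
  map_mul' x y := by ext n; simp only [Prod.fst_mul, Prod.snd_mul, toAdd_mul, Nat.cast_mul,
    mul_pow, pow_add, Pi.mul_apply]; ring

def polyExpEval : MonoidAlgebra ℝ (ℕ × Multiplicative ℕ) →ₐ[ℝ] (ℕ → ℝ) :=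
  MonoidAlgebra.lift ℝ (ℕ → ℝ) _ expMonomial

lemma polyExpEval_apply (P : MonoidAlgebra ℝ (ℕ × Multiplicative ℕ)) (n : ℕ) :
    polyExpEval P n = ∑ x ∈ P.coeff.support, P.coeff x * expMonomial x n := by
  simp [polyExpEval, MonoidAlgebra.lift_apply, Finsupp.sum, Finset.sum_apply]

def polyExp : Subalgebra ℝ (ℕ → ℝ) where
  carrier := {u | ∃ P, polyExpEval P =ᶠ[atTop] u}
  add_mem' := fun ⟨P, hP⟩ ⟨Q, hQ⟩ => ⟨P + Q, by simpa only [map_add] using hP.add hQ⟩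
  mul_mem' := fun ⟨P, hP⟩ ⟨Q, hQ⟩ => ⟨P * Q, by simpa only [map_mul] using hP.mul hQ⟩
  algebraMap_mem' r := ⟨algebraMap ℝ _ r, by rw [AlgHom.commutes]⟩

lemma mem_polyExp_of_eventuallyEq {u v : ℕ → ℝ} (hu : u ∈ polyExp) (h : u =ᶠ[atTop] v) :
    v ∈ polyExp :=
  let ⟨P, hP⟩ := hu; ⟨P, hP.trans h⟩

lemma expMonomial_mem_polyExp (x : ℕ × Multiplicative ℕ) : expMonomial x ∈ polyExp :=
  ⟨MonoidAlgebra.of ℝ _ x, by simp [polyExpEval]⟩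

lemma mem_polyExp_of_eventually_geometric {r : ℕ → ℝ} (c : ℕ)
    (h : ∀ᶠ n in atTop, r (n + 1) = c * r n) : r ∈ polyExp := by
  obtain ⟨N, hN⟩ := eventually_atTop.1 h
  have hgeom : ∀ n ≥ N, r n = r N * c ^ (n - N) := by
    intro n hn
    induction n, hn using Nat.le_induction with
    | base => simp
    | succ n hn ih => rw [hN n hn, ih, Nat.sub_add_comm hn, pow_succ]; ring
  rcases eq_or_ne c 0 with rfl | hc
  · refine mem_polyExp_of_eventuallyEq (zero_mem _) (eventually_atTop.2 ⟨N + 1, fun n hn => ?_⟩)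
    simp [hgeom n (by omega), zero_pow (by omega : n - N ≠ 0)]
  · refine mem_polyExp_of_eventuallyEq
      (Subalgebra.smul_mem _ (expMonomial_mem_polyExp (c, 1)) (r N / c ^ N))
      (eventually_atTop.2 ⟨N, fun n hn => ?_⟩)
    have hcN : (c : ℝ) ^ n = c ^ N * c ^ (n - N) := by rw [← pow_add, Nat.add_sub_cancel' hn]
    simp only [Pi.smul_apply, smul_eq_mul, hgeom n hn, expMonomial, MonoidHom.coe_mk,
      OneHom.coe_mk, toAdd_one, pow_zero, mul_one, hcN]
    field_simp

def recSolvable (c : ℕ) : Submodule ℝ (ℕ → ℝ) where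
  carrier := {v | ∃ w ∈ polyExp, ∀ᶠ n in atTop, w (n + 1) = c * w n + v n}
  zero_mem' := ⟨0, zero_mem _, by simp⟩
  add_mem' := fun ⟨w, hw, h⟩ ⟨w', hw', h'⟩ =>
    ⟨w + w', add_mem hw hw', by
      filter_upwards [h, h'] with n hn hn'
      simp only [Pi.add_apply, hn, hn']
      ring⟩
  smul_mem' r := fun ⟨w, hw, h⟩ =>
    ⟨r • w, Subalgebra.smul_mem _ hw r, by
      filter_upwards [h] with n hn
      simp only [Pi.smul_apply, smul_eq_mul, hn]
      ring⟩

lemma mem_recSolvable_of_eventuallyEq {c : ℕ} {v v' : ℕ → ℝ} (hv : v ∈ recSolvable c)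
    (h : v =ᶠ[atTop] v') : v' ∈ recSolvable c :=
  let ⟨w, hw, hrec⟩ := hv
  ⟨w, hw, by filter_upwards [hrec, h] with n hn hvn; rw [hn, hvn]⟩

lemma shift_sub_mem_recSolvable (c : ℕ) {u : ℕ → ℝ} (hu : u ∈ polyExp) :
    (fun n => u (n + 1) - c * u n) ∈ recSolvable c :=
  ⟨u, hu, Eventually.of_forall fun n => by ring⟩

lemma shift_sub_expMonomial (b c a n : ℕ) :
    (b : ℝ) ^ (n + 1) * ((n + 1 : ℕ) : ℝ) ^ a - c * ((b : ℝ) ^ n * (n : ℝ) ^ a) =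
      (b - c) * ((b : ℝ) ^ n * (n : ℝ) ^ a) +
        ∑ k ∈ Finset.range a, b * a.choose k * ((b : ℝ) ^ n * (n : ℝ) ^ k) := by
  have hsum : ∑ k ∈ Finset.range a, b * a.choose k * ((b : ℝ) ^ n * (n : ℝ) ^ k) =
      (b : ℝ) ^ (n + 1) * ∑ k ∈ Finset.range a, (n : ℝ) ^ k * 1 ^ (a - k) * (a.choose k : ℝ) := by
    rw [Finset.mul_sum]
    exact Finset.sum_congr rfl fun k _ => by ring
  rw [hsum, Nat.cast_succ, add_pow, Finset.sum_range_succ]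
  simp only [Nat.choose_self, Nat.sub_self, pow_zero, Nat.cast_one, mul_one]
  ring

lemma expMonomial_mem_recSolvable (c b a : ℕ) :
    (fun n : ℕ => (b : ℝ) ^ n * (n : ℝ) ^ a) ∈ recSolvable c := by
  rcases Nat.eq_zero_or_pos b with rfl | hb
  · refine mem_recSolvable_of_eventuallyEq (zero_mem _) (eventually_atTop.2 ⟨1, fun n hn => ?_⟩)
    simp [zero_pow (by omega : n ≠ 0)]
  refine Nat.strong_induction_on a fun a ih => ?_
  set m : ℕ → ℕ → ℝ := fun a n => (b : ℝ) ^ n * (n : ℝ) ^ a with hm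
  change m a ∈ recSolvable c
  have hshift (a' : ℕ) : (fun n => m a' (n + 1) - c * m a' n) ∈ recSolvable c :=
    shift_sub_mem_recSolvable c (expMonomial_mem_polyExp (b, .ofAdd a'))
  have hlower (f : ℕ → ℝ) : (fun n => ∑ k ∈ Finset.range a, f k * m k n) ∈ recSolvable c := by
    convert Submodule.sum_mem (recSolvable c) fun k hk =>
      Submodule.smul_mem _ (f k) (ih k (Finset.mem_range.1 hk)) using 1
    ext n
    simp [Finset.sum_apply, m]
  rcases eq_or_ne b c with rfl | hbc
  · -- resonance: the shift of `m (a + 1)` has leading term `b * (a + 1) * m a`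
    have hne : (b * (a + 1) : ℝ) ≠ 0 := by positivity
    have key : m a = (b * (a + 1) : ℝ)⁻¹ • ((fun n => m (a + 1) (n + 1) - b * m (a + 1) n) -
        fun n => ∑ k ∈ Finset.range a, b * (a + 1).choose k * m k n) := by
      ext n
      have hchoose : ((a + 1).choose a : ℝ) = a + 1 := by
        rw [Nat.choose_succ_self_right, Nat.cast_succ]
      have h := shift_sub_expMonomial b b (a + 1) n
      rw [Finset.sum_range_succ, hchoose] at h
      simp only [hm, Pi.smul_apply, Pi.sub_apply, smul_eq_mul]
      rw [eq_inv_mul_iff_mul_eq₀ hne]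
      linear_combination -h
    rw [key]
    exact Submodule.smul_mem _ _ (sub_mem (hshift _) (hlower _))
  · have hne : (b : ℝ) - c ≠ 0 := sub_ne_zero.2 (by exact_mod_cast hbc)
    have key : m a = ((b : ℝ) - c)⁻¹ • ((fun n => m a (n + 1) - c * m a n) -
        fun n => ∑ k ∈ Finset.range a, b * a.choose k * m k n) := by
      ext n
      have h := shift_sub_expMonomial b c a n
      simp only [hm, Pi.smul_apply, Pi.sub_apply, smul_eq_mul]
      rw [eq_inv_mul_iff_mul_eq₀ hne]
      linear_combination -h
    rw [key]
    exact Submodule.smul_mem _ _ (sub_mem (hshift _) (hlower _))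

lemma mem_recSolvable_of_mem_polyExp (c : ℕ) {v : ℕ → ℝ} (hv : v ∈ polyExp) :
    v ∈ recSolvable c := by
  obtain ⟨P, hP⟩ := hv
  refine mem_recSolvable_of_eventuallyEq ?_ hP
  clear hP
  induction P using MonoidAlgebra.induction_on with
  | of x =>
    rw [polyExpEval, MonoidAlgebra.lift_of]
    exact expMonomial_mem_recSolvable c x.1 x.2.toAdd
  | add P Q hP hQ => simpa only [map_add] using add_mem hP hQ
  | smul r P hP => simpa only [map_smul] using Submodule.smul_mem _ r hP

/-- A particular solution in `polyExp` plus a geometric solution of the homogeneous recurrence. -/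
lemma mem_polyExp_of_recurrence (c : ℕ) {u v : ℕ → ℝ} (hv : v ∈ polyExp)
    (hrec : ∀ᶠ n in atTop, u (n + 1) = c * u n + v n) : u ∈ polyExp := by
  obtain ⟨w, hw, hwrec⟩ := mem_recSolvable_of_mem_polyExp c hv
  have hhom : u - w ∈ polyExp := mem_polyExp_of_eventually_geometric c <| by
    filter_upwards [hrec, hwrec] with n hu hw
    simp only [Pi.sub_apply, hu, hw]
    ring
  simpa using add_mem hhom hw

lemma isLittleO_expMonomial {x y : ℕ × Multiplicative ℕ} (h : toLex x < toLex y) :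
    expMonomial x =o[atTop] expMonomial y := by
  obtain ⟨b₁, a₁⟩ := x
  obtain ⟨b₂, a₂⟩ := y
  show (fun n : ℕ => (b₁ : ℝ) ^ n * (n : ℝ) ^ a₁.toAdd) =o[atTop]
    fun n : ℕ => (b₂ : ℝ) ^ n * (n : ℝ) ^ a₂.toAdd
  rcases Prod.Lex.lt_iff.1 h with hb | ⟨hb, ha⟩
  · have hb₂ : (0 : ℝ) < b₂ := by exact_mod_cast (Nat.zero_le _).trans_lt hb
    have hratio : (fun n : ℕ => (n : ℝ) ^ a₁.toAdd * ((b₁ : ℝ) / b₂) ^ n) =o[atTop]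
        fun _ => (1 : ℝ) :=
      (isLittleO_one_iff ℝ).2 <| tendsto_pow_const_mul_const_pow_of_lt_one _ (by positivity)
        ((div_lt_one hb₂).2 (by exact_mod_cast hb))
    have hpoly : (fun n : ℕ => (b₂ : ℝ) ^ n) =O[atTop]
        fun n : ℕ => (b₂ : ℝ) ^ n * (n : ℝ) ^ a₂.toAdd := by
      refine IsBigO.of_bound 1 (eventually_atTop.2 ⟨1, fun n hn => ?_⟩)
      have hn' : (1 : ℝ) ≤ n := by exact_mod_cast hn
      rw [one_mul, Real.norm_of_nonneg (by positivity), Real.norm_of_nonneg (by positivity)]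
      exact le_mul_of_one_le_right (by positivity) (one_le_pow₀ hn')
    refine (hratio.mul_isBigO hpoly).congr (fun n => ?_) (fun n => one_mul _)
    rw [div_pow]
    field_simp
  · subst hb
    have ha' : a₁.toAdd < a₂.toAdd := ha
    exact (isBigO_refl (fun n : ℕ => (b₁ : ℝ) ^ n) atTop).mul_isLittleO
      ((isLittleO_pow_pow_atTop_of_lt ha').comp_tendsto tendsto_natCast_atTop_atTop)

lemma eventually_sign_expMonomial (x : ℕ × Multiplicative ℕ) :
    ∀ᶠ n in atTop, SignType.sign (expMonomial x n) = SignType.sign (x.1 : ℝ) := by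
  filter_upwards [eventually_ge_atTop 1] with n hn
  show SignType.sign ((x.1 : ℝ) ^ n * (n : ℝ) ^ x.2.toAdd) = _
  rcases Nat.eq_zero_or_pos x.1 with h0 | hpos
  · simp [h0, zero_pow (by omega : n ≠ 0)]
  · have hx : (0 : ℝ) < x.1 := by exact_mod_cast hpos
    have hn' : (0 : ℝ) < n := by exact_mod_cast hn
    rw [sign_pos (by positivity), sign_pos hx]

lemma eventually_sign_eq_of_isLittleO {α : Type*} {l : Filter α} {u g : α → ℝ} {c : ℝ}
    (hc : c ≠ 0) (h : (fun x => u x - c * g x) =o[l] g) :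
    ∀ᶠ x in l, SignType.sign (u x) = SignType.sign c * SignType.sign (g x) := by
  filter_upwards [h.bound (half_pos (abs_pos.2 hc))] with x hx
  rw [Real.norm_eq_abs, Real.norm_eq_abs] at hx
  have hclose : |u x - c * g x| ≤ |c * g x| / 2 := by rw [abs_mul]; linarith
  have habs := abs_le.1 hclose
  rw [← sign_mul]
  rcases lt_trichotomy (c * g x) 0 with hy | hy | hy
  · rw [abs_of_neg hy] at habs
    rw [sign_neg hy, sign_neg (by linarith)]
  · rw [hy, abs_zero] at habs
    rw [hy, show u x = 0 by linarith]
  · rw [abs_of_pos hy] at habs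
    rw [sign_pos hy, sign_pos (by linarith)]

theorem eventuallyConst_sign_of_mem_polyExp {u : ℕ → ℝ} (hu : u ∈ polyExp) :
    EventuallyConst (fun n => SignType.sign (u n)) atTop := by
  obtain ⟨P, hP⟩ := hu
  refine EventuallyConst.congr (f := fun n => SignType.sign (polyExpEval P n)) ?_
    (hP.fun_comp SignType.sign)
  rcases P.coeff.support.eq_empty_or_nonempty with hempty | hne
  · simp only [polyExpEval_apply, hempty, Finset.sum_empty]
    exact EventuallyConst.const _
  obtain ⟨m, hm, hmax⟩ := P.coeff.support.exists_max_image toLex hne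
  have hrest : (fun n => polyExpEval P n - P.coeff m * expMonomial m n) =o[atTop]
      expMonomial m := by
    simp only [polyExpEval_apply, ← Finset.add_sum_erase _ _ hm, add_sub_cancel_left]
    refine IsLittleO.fun_sum fun x hx => (isLittleO_expMonomial ?_).const_mul_left _
    exact (hmax x (Finset.mem_of_mem_erase hx)).lt_of_ne
      (toLex.injective.ne (Finset.ne_of_mem_erase hx))
  refine eventuallyConst_iff_exists_eventuallyEq.2
    ⟨SignType.sign (P.coeff m) * SignType.sign (m.1 : ℝ), ?_⟩
  filter_upwards [eventually_sign_eq_of_isLittleO (Finsupp.mem_support_iff.1 hm) hrest,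
    eventually_sign_expMonomial m] with n hsign hmono
  rw [hsign, hmono]

lemma intCast_eval_mem_polyExp {σ : Type*} {x : ℕ → σ → ℤ}
    (hx : ∀ j, (fun n => (x n j : ℝ)) ∈ polyExp) (p : MvPolynomial σ ℤ) :
    (fun n => (MvPolynomial.eval (x n) p : ℝ)) ∈ polyExp := by
  induction p using MvPolynomial.induction_on with
  | C a =>
    simp only [MvPolynomial.eval_C]
    exact algebraMap_mem polyExp (a : ℝ)
  | add p q hp hq =>
    simp only [map_add, Int.cast_add]
    exact add_mem hp hq
  | mul_X p j hp =>
    simp only [map_mul, MvPolynomial.eval_X, Int.cast_mul]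
    exact mul_mem hp (hx j)

lemma intCast_eval_mem_polyExp_of_vars {σ : Type*} {x : ℕ → σ → ℤ} {p : MvPolynomial σ ℤ}
    (hx : ∀ j ∈ p.vars, (fun n => (x n j : ℝ)) ∈ polyExp) :
    (fun n => (MvPolynomial.eval (x n) p : ℝ)) ∈ polyExp := by
  obtain ⟨q, hq⟩ := (AlgHom.mem_range _).1
    (MvPolynomial.supported_eq_range_rename (R := ℤ) _ ▸ p.mem_supported_vars)
  rw [← hq]
  simp only [MvPolynomial.eval_rename]
  exact intCast_eval_mem_polyExp (x := fun n (j : p.vars) => x n j) (fun j => hx j j.2) q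

lemma IsTriangular.orbit_mem_polyExp {d : ℕ} {η : Fin d → MvPolynomial (Fin d) ℤ}
    {c : Fin d → ℤ} {p : Fin d → MvPolynomial (Fin d) ℤ} (htri : IsTriangular η c p)
    (hc : ∀ i, 0 ≤ c i) (e : Fin d → ℤ) (i : Fin d) :
    (fun n => ((updFun η)^[n] e i : ℝ)) ∈ polyExp := by
  induction i using WellFoundedGT.induction with | _ i ih => ?_
  have hforce := intCast_eval_mem_polyExp_of_vars (x := fun n => (updFun η)^[n] e)
    fun j hj => ih j ((htri i).2 j hj)
  have hci : (((c i).toNat : ℕ) : ℝ) = c i := by exact_mod_cast Int.toNat_of_nonneg (hc i)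
  refine mem_polyExp_of_recurrence (c i).toNat hforce (Eventually.of_forall fun n => ?_)
  rw [Function.iterate_succ_apply', updFun, (htri i).1, hci]
  simp

theorem Fml.eventuallyConst_holds {V : Type*} {x : ℕ → V → ℤ}
    (hx : ∀ p : MvPolynomial V ℤ,
      EventuallyConst (fun n => SignType.sign (MvPolynomial.eval (x n) p)) atTop) :
    ∀ φ : Fml V, EventuallyConst (fun n => φ.holds (x n)) atTop
  | .lt p q => by
    simpa only [Fml.holds, Function.comp_def, sign_eq_one_iff, map_sub, sub_pos] using
      (hx (q - p)).comp (· = 1)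
  | .and φ ψ => (eventuallyConst_holds hx φ).comp₂ (· ∧ ·) (eventuallyConst_holds hx ψ)
  | .or φ ψ => (eventuallyConst_holds hx φ).comp₂ (· ∨ ·) (eventuallyConst_holds hx ψ)

theorem IsTNN.eventuallyConst_holds {d : ℕ} {η : Fin d → MvPolynomial (Fin d) ℤ}
    (htnn : IsTNN η) (e : Fin d → ℤ) (φ : Fml (Fin d)) :
    EventuallyConst (fun n => φ.holds ((updFun η)^[n] e)) atTop := by
  obtain ⟨c, p, htri, hc⟩ := htnn
  refine Fml.eventuallyConst_holds (fun q => ?_) φ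
  simpa only [sign_intCast] using eventuallyConst_sign_of_mem_polyExp
    (intCast_eval_mem_polyExp (htri.orbit_mem_polyExp hc e) q)

/-- the truth value of a guard `φ` stabilizes along every orbit of a
tnn update, i.e. the stabilization threshold (the smallest such `s`) exists. -/
theorem tnn_guard_stabilizes {d : ℕ} (η : Fin d → MvPolynomial (Fin d) ℤ)
    (htnn : IsTNN η) (φ : Fml (Fin d)) (e : Fin d → ℤ) :
    ∃ s : ℕ,
      (∀ n ≥ s, (φ.holds ((updFun η)^[n] e) ↔ φ.holds ((updFun η)^[s] e))) ∧
      ∀ s' : ℕ, (∀ n ≥ s', (φ.holds ((updFun η)^[n] e) ↔ φ.holds ((updFun η)^[s'] e))) →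
        s ≤ s' := by
  have hex : ∃ s : ℕ, ∀ n ≥ s, (φ.holds ((updFun η)^[n] e) ↔ φ.holds ((updFun η)^[s] e)) := by
    obtain ⟨s, hs⟩ := eventuallyConst_atTop.1 (htnn.eventuallyConst_holds e φ)
    exact ⟨s, fun n hn => Iff.of_eq (hs n hn)⟩
  exact ⟨Nat.find hex, Nat.find_spec hex, fun s' hs' => Nat.find_min' hex hs'⟩

end Koat
end
end

section
/- Let η be a tnn update over ℤ^d. Then there exist n0 ∈ ℕ and, for each 1 ≤ i ≤ d, finitely many triples (q_{i,1}, a_{i,1}, b_{i,1}), ..., (q_{i,ℓ_i}, a_{i,ℓ_i}, b_{i,ℓ_i}) with q_{i,j} ∈ ℚ[x1,...,xd], a_{i,j} ∈ ℕ and b_{i,j} ∈ ℕ_{≥1}, such that for all e ∈ ℤ^d and all natural numbers n ≥ n0: (η^n(e))_i = Σ_{j=1}^{ℓ_i} q_{i,j}(e)·n^{a_{i,j}}·b_{i,j}^n. That is, every tnn update admits a normalized closed form given by normalized poly-exponential expressions. -/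
open scoped Classical

noncomputable section

namespace Polynomial

variable {K : Type*} [Field K]

theorem taylor_one_X_pow_sub (k : ℕ) :
    taylor (1 : K) (X ^ k) - X ^ k = ∑ m ∈ Finset.range k, (k.choose m : K) • X ^ m := by
  rw [taylor_X_pow, map_one, add_pow, Finset.sum_range_succ]
  simp only [one_pow, mul_one, Nat.choose_self, Nat.cast_one, add_sub_cancel_right]
  exact Finset.sum_congr rfl fun m _ => by rw [Nat.cast_smul_eq_nsmul, nsmul_eq_mul, mul_comm]

theorem X_pow_mem_range_smul_taylor_sub [CharZero K] {b : K} (hb : b ≠ 0) (c : K) (a : ℕ) :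
    X ^ a ∈ LinearMap.range (b • taylor 1 - c • LinearMap.id : K[X] →ₗ[K] K[X]) := by
  set L : K[X] →ₗ[K] K[X] := b • taylor 1 - c • LinearMap.id
  induction a using Nat.strong_induction_on with
  | _ a ih =>
  have lower : ∀ r : ℕ → K, ∑ m ∈ Finset.range a, r m • X ^ m ∈ L.range := fun r =>
    L.range.sum_mem fun m hm => L.range.smul_mem _ (ih m (Finset.mem_range.mp hm))
  have hL : ∀ k, L (X ^ k) = (b - c) • X ^ k + b • (taylor 1 (X ^ k) - X ^ k) := fun k => by
    simp only [L, LinearMap.sub_apply, LinearMap.smul_apply, LinearMap.id_apply]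
    module
  by_cases hbc : b = c
  -- then `L` lowers degrees by one, so `X ^ a` is reached from `X ^ (a + 1)`
  · subst hbc
    have h : L (X ^ (a + 1)) = (b * (a + 1)) • X ^ a
        + b • ∑ m ∈ Finset.range a, ((a + 1).choose m : K) • X ^ m := by
      rw [hL, sub_self, zero_smul, zero_add, taylor_one_X_pow_sub, Finset.sum_range_succ,
        Nat.choose_succ_self_right]
      push_cast
      module
    have hmem := L.mem_range_self (X ^ (a + 1))
    rwa [h, L.range.add_mem_iff_left (L.range.smul_mem _ (lower _)),
      L.range.smul_mem_iff (mul_ne_zero hb (Nat.cast_add_one_ne_zero a))] at hmem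
  · have hmem := L.mem_range_self (X ^ a)
    rwa [hL, taylor_one_X_pow_sub, L.range.add_mem_iff_left (L.range.smul_mem _ (lower _)),
      L.range.smul_mem_iff (sub_ne_zero.mpr hbc)] at hmem

theorem exists_mul_eval_add_one_sub_mul_eval [CharZero K] {b : K} (hb : b ≠ 0) (c : K)
    (a : ℕ) : ∃ P : K[X], ∀ x, b * P.eval (x + 1) - c * P.eval x = x ^ a := by
  obtain ⟨P, hP⟩ := X_pow_mem_range_smul_taylor_sub hb c a
  refine ⟨P, fun x => ?_⟩
  simpa [taylor_eval] using congrArg (eval x) hP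

end Polynomial

namespace Koat

open MvPolynomial

variable {d : ℕ}

def NPE.Normalized (l : NPE d) : Prop := ∀ tr ∈ l, 1 ≤ tr.2.2

def NPE.mul (l l' : NPE d) : NPE d :=
  l.flatMap fun s => l'.map fun t => (s.1 * t.1, s.2.1 + t.2.1, s.2.2 * t.2.2)

theorem NPE.Normalized.append {l l' : NPE d} (hl : NPE.Normalized l)
    (hl' : NPE.Normalized l') : NPE.Normalized (l ++ l') := by
  intro tr htr
  rcases List.mem_append.mp htr with h | h
  exacts [hl tr h, hl' tr h]

theorem NPE.Normalized.mul {l l' : NPE d} (hl : NPE.Normalized l) (hl' : NPE.Normalized l') :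
    NPE.Normalized (NPE.mul l l') := by
  simp only [NPE.Normalized, NPE.mul, List.mem_flatMap, List.mem_map]
  rintro _ ⟨s, hs, t, ht, rfl⟩
  exact Nat.mul_le_mul (hl s hs) (hl' t ht)

@[simp]
theorem evalNPE_nil (e : Fin d → ℤ) (n : ℕ) : evalNPE ([] : NPE d) e n = 0 := rfl

theorem evalNPE_cons (tr : MvPolynomial (Fin d) ℚ × ℕ × ℕ) (l : NPE d) (e : Fin d → ℤ) (n : ℕ) :
    evalNPE (tr :: l) e n =
      eval (fun i => (e i : ℚ)) tr.1 * (n : ℚ) ^ tr.2.1 * (tr.2.2 : ℚ) ^ n + evalNPE l e n := by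
  simp [evalNPE]

theorem evalNPE_append (l l' : NPE d) (e : Fin d → ℤ) (n : ℕ) :
    evalNPE (l ++ l') e n = evalNPE l e n + evalNPE l' e n := by
  simp [evalNPE]

theorem evalNPE_mul (l l' : NPE d) (e : Fin d → ℤ) (n : ℕ) :
    evalNPE (NPE.mul l l') e n = evalNPE l e n * evalNPE l' e n := by
  induction l with
  | nil => simp [NPE.mul]
  | cons s l ih =>
    rw [NPE.mul, List.flatMap_cons, evalNPE_append, ← NPE.mul, ih, evalNPE_cons, add_mul]
    congr 1
    simp only [evalNPE, List.map_map, ← List.sum_map_mul_left]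
    congr 1
    refine List.map_congr_left fun t _ => ?_
    simp only [Function.comp_apply, map_mul, Nat.cast_mul, mul_pow, pow_add]
    ring

theorem evalNPE_eq_eval (l : NPE d) (n : ℕ) : ∃ R : MvPolynomial (Fin d) ℚ,
    ∀ e : Fin d → ℤ, evalNPE l e n = eval (fun i => (e i : ℚ)) R :=
  ⟨(l.map fun tr => C ((n : ℚ) ^ tr.2.1 * (tr.2.2 : ℚ) ^ n) * tr.1).sum, fun e => by
    simp only [evalNPE, map_list_sum, List.map_map]
    congr 1
    refine List.map_congr_left fun tr _ => ?_
    simp only [Function.comp_apply, map_mul, eval_C]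
    ring⟩

def eventuallyNPE (d : ℕ) : Subalgebra ℚ ((Fin d → ℤ) → ℕ → ℚ) where
  carrier := {F | ∃ (n₀ : ℕ) (l : NPE d), NPE.Normalized l ∧
    ∀ e n, n₀ ≤ n → F e n = evalNPE l e n}
  mul_mem' := by
    rintro F G ⟨n₁, l₁, h₁, hF⟩ ⟨n₂, l₂, h₂, hG⟩
    refine ⟨max n₁ n₂, NPE.mul l₁ l₂, h₁.mul h₂, fun e n hn => ?_⟩
    rw [evalNPE_mul, ← hF e n (le_of_max_le_left hn), ← hG e n (le_of_max_le_right hn)]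
    rfl
  add_mem' := by
    rintro F G ⟨n₁, l₁, h₁, hF⟩ ⟨n₂, l₂, h₂, hG⟩
    refine ⟨max n₁ n₂, l₁ ++ l₂, h₁.append h₂, fun e n hn => ?_⟩
    rw [evalNPE_append, ← hF e n (le_of_max_le_left hn), ← hG e n (le_of_max_le_right hn)]
    rfl
  algebraMap_mem' r := ⟨0, [(C r, 0, 1)], by simp [NPE.Normalized], fun e n _ => by
    simp [evalNPE_cons]⟩

namespace eventuallyNPE

theorem mem_of_eventually_eq {F G : (Fin d → ℤ) → ℕ → ℚ} (hF : F ∈ eventuallyNPE d) (n₀ : ℕ)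
    (h : ∀ e n, n₀ ≤ n → F e n = G e n) : G ∈ eventuallyNPE d := by
  obtain ⟨n₁, l, hl, hF⟩ := hF
  exact ⟨max n₀ n₁, l, hl, fun e n hn => by
    rw [← h e n (le_of_max_le_left hn), hF e n (le_of_max_le_right hn)]⟩

theorem exists_eval_eq {F : (Fin d → ℤ) → ℕ → ℚ} (hF : F ∈ eventuallyNPE d) :
    ∃ n₀, ∀ n, n₀ ≤ n → ∃ R : MvPolynomial (Fin d) ℚ,
      ∀ e : Fin d → ℤ, F e n = eval (fun i => (e i : ℚ)) R := by
  obtain ⟨n₀, l, -, hF⟩ := hF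
  refine ⟨n₀, fun n hn => ?_⟩
  obtain ⟨R, hR⟩ := evalNPE_eq_eval l n
  exact ⟨R, fun e => (hF e n hn).trans (hR e)⟩

theorem eval_mem (q : MvPolynomial (Fin d) ℚ) :
    (fun e _ => eval (fun i => (e i : ℚ)) q) ∈ eventuallyNPE d :=
  ⟨0, [(q, 0, 1)], by simp [NPE.Normalized], fun e n _ => by simp [evalNPE_cons]⟩

theorem natCast_mem : (fun (_ : Fin d → ℤ) (n : ℕ) => (n : ℚ)) ∈ eventuallyNPE d :=
  ⟨0, [(1, 1, 1)], by simp [NPE.Normalized], fun e n _ => by simp [evalNPE_cons]⟩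

theorem pow_mem {b : ℕ} (hb : 1 ≤ b) : (fun _ n => (b : ℚ) ^ n) ∈ eventuallyNPE d :=
  ⟨0, [(1, 0, b)], by simpa [NPE.Normalized] using hb, fun e n _ => by simp [evalNPE_cons]⟩

theorem pow_sub_mem (c m : ℕ) : (fun _ n => (c : ℚ) ^ (n - m)) ∈ eventuallyNPE d := by
  rcases Nat.eq_zero_or_pos c with rfl | hc
  · refine mem_of_eventually_eq (zero_mem _) (m + 1) fun e n hn => ?_
    simp [zero_pow (Nat.sub_ne_zero_of_lt hn)]
  · refine mem_of_eventually_eq (Subalgebra.smul_mem _ (pow_mem hc) ((c : ℚ) ^ m)⁻¹) m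
      fun e n hn => ?_
    simp only [Pi.smul_apply, smul_eq_mul]
    rw [pow_sub₀ (c : ℚ) (by exact_mod_cast hc.ne') hn]
    ring

theorem polynomial_eval_mem (P : Polynomial ℚ) {F : (Fin d → ℤ) → ℕ → ℚ}
    (hF : F ∈ eventuallyNPE d) : (fun e n => P.eval (F e n)) ∈ eventuallyNPE d := by
  induction P using Polynomial.induction_on with
  | C a =>
    simp only [Polynomial.eval_C]
    exact algebraMap_mem (eventuallyNPE d) a
  | add P Q hP hQ =>
    simp only [Polynomial.eval_add]
    exact add_mem hP hQ
  | monomial k a ih =>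
    convert mul_mem ih hF using 1
    ext e n
    simp [pow_succ, mul_assoc]

theorem mvPolynomial_eval_mem (p : MvPolynomial (Fin d) ℚ) {F : Fin d → (Fin d → ℤ) → ℕ → ℚ}
    (hF : ∀ j ∈ p.vars, F j ∈ eventuallyNPE d) :
    (fun e n => eval (fun j => F j e n) p) ∈ eventuallyNPE d := by
  set F' := fun j => if j ∈ p.vars then F j else 0
  have hF' : ∀ q : MvPolynomial (Fin d) ℚ,
      (fun e n => eval (fun j => F' j e n) q) ∈ eventuallyNPE d := by
    intro q
    induction q using MvPolynomial.induction_on with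
    | C a =>
      simp only [eval_C]
      exact algebraMap_mem (eventuallyNPE d) a
    | add q r hq hr =>
      simp only [map_add]
      exact add_mem hq hr
    | mul_X q j hq =>
      simp only [map_mul, eval_X]
      refine mul_mem hq ?_
      by_cases hj : j ∈ p.vars
      · simpa [F', hj] using hF j hj
      · simp [F', hj]
  convert hF' p using 3 with e n
  exact eval₂Hom_congr' rfl (fun j hj _ => by simp [F', hj]) rfl

theorem exists_solution_of_evalNPE (c : ℕ) {l : NPE d} (hl : NPE.Normalized l) :
    ∃ Φ ∈ eventuallyNPE d, ∀ e n, Φ e (n + 1) = c * Φ e n + evalNPE l e n := by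
  induction l with
  | nil => exact ⟨0, zero_mem _, fun e n => by simp⟩
  | cons tr l ih =>
    obtain ⟨q, a, b⟩ := tr
    have hb : 1 ≤ b := hl _ List.mem_cons_self
    obtain ⟨Φ, hΦ, hrec⟩ := ih fun tr htr => hl tr (List.mem_cons_of_mem _ htr)
    obtain ⟨P, hP⟩ := Polynomial.exists_mul_eval_add_one_sub_mul_eval
      (Nat.cast_ne_zero.mpr (by omega : b ≠ 0) : (b : ℚ) ≠ 0) c a
    refine ⟨fun e n => eval (fun i => (e i : ℚ)) q * P.eval (n : ℚ) * (b : ℚ) ^ n + Φ e n,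
      add_mem (mul_mem (mul_mem (eval_mem q) (polynomial_eval_mem P natCast_mem)) (pow_mem hb)) hΦ,
      fun e n => ?_⟩
    simp only [evalNPE_cons, hrec]
    push_cast
    linear_combination eval (fun i => (e i : ℚ)) q * (b : ℚ) ^ n * hP n

theorem mem_of_recurrence (c : ℕ) {X G : (Fin d → ℤ) → ℕ → ℚ} (hG : G ∈ eventuallyNPE d)
    (hrec : ∀ e n, X e (n + 1) = c * X e n + G e n)
    (hX : ∀ n, ∃ Q : MvPolynomial (Fin d) ℚ, ∀ e, X e n = eval (fun i => (e i : ℚ)) Q) :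
    X ∈ eventuallyNPE d := by
  obtain ⟨n₁, l, hl, hG⟩ := hG
  obtain ⟨Φ, hΦ, hΦrec⟩ := exists_solution_of_evalNPE c hl
  obtain ⟨n₂, hΦpoly⟩ := exists_eval_eq hΦ
  set m := max n₁ n₂
  obtain ⟨Q, hQ⟩ := hX m
  obtain ⟨R, hR⟩ := hΦpoly m (le_max_right _ _)
  have homogeneous : ∀ e n, m ≤ n → X e n - Φ e n = (X e m - Φ e m) * (c : ℚ) ^ (n - m) := by
    intro e n hn
    induction n, hn using Nat.le_induction with
    | base => simp
    | succ n hn ih =>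
      rw [hrec, hΦrec, hG e n (le_of_max_le_left hn), Nat.sub_add_comm hn, pow_succ]
      linear_combination (c : ℚ) * ih
  refine mem_of_eventually_eq (add_mem hΦ (mul_mem (eval_mem (Q - R)) (pow_sub_mem c m))) m
    fun e n hn => ?_
  simp only [Pi.add_apply, Pi.mul_apply, map_sub, ← hQ, ← hR]
  linear_combination -(homogeneous e n hn)

end eventuallyNPE

theorem intCast_eval (e : Fin d → ℤ) (p : MvPolynomial (Fin d) ℤ) :
    ((eval e p : ℤ) : ℚ) = eval (fun i => (e i : ℚ)) (map (Int.castRingHom ℚ) p) := by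
  rw [eval_map, ← eq_intCast (Int.castRingHom ℚ), eval, coe_eval₂Hom, eval₂_comp_left]
  rfl

theorem eval_iterate_bind₁ (η : Fin d → MvPolynomial (Fin d) ℤ) (n : ℕ) (e : Fin d → ℤ)
    (p : MvPolynomial (Fin d) ℤ) : eval e ((bind₁ η)^[n] p) = eval ((updFun η)^[n] e) p := by
  induction n generalizing e with
  | zero => rfl
  | succ n ih =>
    rw [Function.iterate_succ_apply', Function.iterate_succ_apply, ← ih]
    exact eval₂Hom_bind₁ _ _ _ _

theorem iterate_updFun_mem {η p : Fin d → MvPolynomial (Fin d) ℤ} {c : Fin d → ℕ}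
    (htri : IsTriangular η (fun i => (c i : ℤ)) p) (i : Fin d) :
    (fun e n => (((updFun η)^[n] e) i : ℚ)) ∈ eventuallyNPE d := by
  induction i using WellFoundedGT.induction with
  | _ i ih =>
  obtain ⟨hηi, hvars⟩ := htri i
  refine eventuallyNPE.mem_of_recurrence (c i)
    (eventuallyNPE.mvPolynomial_eval_mem (map (Int.castRingHom ℚ) (p i))
      fun j hj => ih j (hvars j (vars_map _ _ hj))) (fun e n => ?_) (fun n => ?_)
  · rw [Function.iterate_succ_apply']
    simp [updFun, hηi, intCast_eval]
  · refine ⟨map (Int.castRingHom ℚ) ((bind₁ η)^[n] (X i)), fun e => ?_⟩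
    rw [← intCast_eval, eval_iterate_bind₁, eval_X]

/-- every tnn update admits a normalized closed form:
there are `n₀` and normalized poly-exponential expressions whose values give the
components of `η^n(e)` for all `n ≥ n₀`. -/
theorem tnn_closed_form {d : ℕ} (η : Fin d → MvPolynomial (Fin d) ℤ) (htnn : IsTNN η) :
    ∃ (n₀ : ℕ) (cl : Fin d → NPE d),
      (∀ i : Fin d, ∀ tr ∈ cl i, 1 ≤ tr.2.2) ∧
      ∀ (e : Fin d → ℤ) (n : ℕ), n₀ ≤ n → ∀ i : Fin d,
        (((updFun η)^[n] e) i : ℚ) = evalNPE (cl i) e n := by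
  obtain ⟨c, p, htri, hc⟩ := htnn
  lift c to Fin d → ℕ using hc
  choose n₀ cl hcl hval using iterate_updFun_mem htri
  exact ⟨Finset.univ.sup n₀, cl, hcl, fun e n hn i =>
    hval i e n ((Finset.le_sup (Finset.mem_univ i)).trans hn)⟩

end Koat
end
end

section
/- Let P = (PV, L, ℓ0, T) be an integer program with PV' = {x1,...,xd} ⊆ PV, and let t = (ℓ, φ, η, ℓ) ∈ T be a self-loop with φ a formula over PV', η(v) ∈ ℤ[PV'] for all v ∈ PV', and η(v) = v for all v ∈ PV∖PV'. Let r ∈ E_{{t}} be an entry transition with target location ℓ, and let ψ be a formula over PV' such that ψ is an update-invariant of η (every state satisfying ψ satisfies ψ after applying η) and such that σ(ψ) holds for every state σ with (ℓ0,σ0) →*_T ∘ →_r (ℓ,σ) for some state σ0. Let b ∈ B be any weakly monotonically increasing bound such that for every state σ satisfying ψ and φ: |σ|(b) ≥ sup{k ∈ ℕ : φ holds at η^i(σ) for all i < k} (for a terminating tnn-loop (ψ,φ,η) such a b is provided by the bound sth⊔ of the Bound-on-Stabilization-Threshold theorem, and for a terminating twn-loop by 2·sth⊔+1 computed for the chained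 loop). Then RBloc with RBloc(r) = b and RBloc(r') = ω for all other r' ∈ E_{{t}} is a local runtime bound for {t} = T'_> = T' in P. -/
open scoped Classical

noncomputable section

namespace Koat

lemma eval_congr_vars {V : Type*} (p : MvPolynomial V ℤ) (σ τ : V → ℤ)
    (h : ∀ v ∈ p.vars, σ v = τ v) :
    MvPolynomial.eval σ p = MvPolynomial.eval τ p := by
  show MvPolynomial.eval₂Hom (RingHom.id ℤ) σ p = MvPolynomial.eval₂Hom (RingHom.id ℤ) τ p
  exact MvPolynomial.eval₂Hom_congr' rfl (fun i hi _ => h i hi) rfl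

lemma holds_congr_vars {V : Type*} (f : Fml V) (σ τ : V → ℤ)
    (h : ∀ v ∈ f.vars, σ v = τ v) : f.holds σ ↔ f.holds τ := by
  induction f with
  | lt p q =>
      have hp : MvPolynomial.eval σ p = MvPolynomial.eval τ p :=
        eval_congr_vars p σ τ fun v hv => h v (Finset.mem_union_left _ hv)
      have hq : MvPolynomial.eval σ q = MvPolynomial.eval τ q :=
        eval_congr_vars q σ τ fun v hv => h v (Finset.mem_union_right _ hv)
      simp [Fml.holds, hp, hq]
  | and f g ihf ihg =>
      simp only [Fml.holds]
      rw [ihf fun v hv => h v (Finset.mem_union_left _ hv),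
        ihg fun v hv => h v (Finset.mem_union_right _ hv)]
  | or f g ihf ihg =>
      simp only [Fml.holds]
      rw [ihf fun v hv => h v (Finset.mem_union_left _ hv),
        ihg fun v hv => h v (Finset.mem_union_right _ hv)]

lemma relPow_trans {α : Type*} {R : α → α → Prop} :
    ∀ (b a : ℕ) (x y z : α), relPow R a x y → relPow R b y z → relPow R (a + b) x z := by
  intro b
  induction b with
  | zero => intro a x y z h1 h2; cases h2; simpa using h1
  | succ b ih =>
      intro a x y z h1 h2
      obtain ⟨w, hw1, hw2⟩ := h2
      exact ⟨w, ih a x y w h1 hw1, hw2⟩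

lemma reflTransGen_singleton_relPow {L V : Type*} {PV : Set V} {t : Trans L V}
    {c c' : Config L V} (h : Relation.ReflTransGen (StepAny PV {t}) c c') :
    ∃ n, relPow (Step PV t) n c c' := by
  induction h with
  | refl => exact ⟨0, rfl⟩
  | tail _ hstep ih =>
      obtain ⟨n, hn⟩ := ih
      obtain ⟨t', ht', hs⟩ := hstep
      rw [Finset.mem_singleton] at ht'
      subst ht'
      exact ⟨n + 1, _, hn, hs⟩

lemma relPow_starThen_singleton {L V : Type*} {PV : Set V} {t : Trans L V} :
    ∀ (k : ℕ) (c c' : Config L V), relPow (starThen PV {t} t) k c c' →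
      ∃ m, k ≤ m ∧ relPow (Step PV t) m c c' := by
  intro k
  induction k with
  | zero => intro c c' h; cases h; exact ⟨0, le_refl 0, rfl⟩
  | succ k ih =>
      intro c c' h
      obtain ⟨mid, hmid, y, hy1, hy2⟩ := h
      obtain ⟨m, hkm, hm⟩ := ih c mid hmid
      obtain ⟨n, hn⟩ := reflTransGen_singleton_relPow hy1
      refine ⟨m + n + 1, by omega, ?_⟩
      exact ⟨y, relPow_trans n m c mid y hm hn, hy2⟩

/-- local bounds for twn-self-loops, Thm. 18 of the paper:
a bound `b` on the number of iterations of the self-loop `t` (for states satisfying the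
update-invariant `ψ` and the guard) yields a local runtime bound for `{t} = T'_> = T'`. -/
theorem local_bound_for_twn_selfloop {L V : Type*} [Finite L]
    (PV PV' : Set V) (hPVfin : PV.Finite) (hPV' : PV' ⊆ PV)
    (ℓ₀ : L) (T : Finset (Trans L V)) (hnoIncoming : ∀ t' ∈ T, t'.tgt ≠ ℓ₀)
    (t : Trans L V) (htT : t ∈ T) (hself : t.src = t.tgt)
    (hguard : ↑t.guard.vars ⊆ PV')
    (hupd : ∀ v ∈ PV', ↑(t.update v).vars ⊆ PV')
    (hupdId : ∀ v ∈ PV, v ∉ PV' → t.update v = MvPolynomial.X v)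
    (r : Trans L V) (hr : r ∈ entrySet T {t})
    (ψ : Fml V) (hψvars : ↑ψ.vars ⊆ PV')
    (hψinv : ∀ σ : V → ℤ, ψ.holds σ →
      ψ.holds (fun v => MvPolynomial.eval σ (t.update v)))
    (hψreach : ∀ σ₀ σ : V → ℤ, starThen PV T r (ℓ₀, σ₀) (r.tgt, σ) → ψ.holds σ)
    (b : Bnd V)
    (hb : ∀ σ : V → ℤ, ψ.holds σ → t.guard.holds σ →
      (⨆ k ∈ {k : ℕ |
          ∀ i < k, t.guard.holds ((fun τ v => MvPolynomial.eval τ (t.update v))^[i] σ)},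
        (k : ℕ∞)) ≤ b.eval (absState σ)) :
    IsLocalRB PV ℓ₀ T {t} {t} (fun r' => if r' = r then b else .const ⊤) := by
  classical
  set F : (V → ℤ) → (V → ℤ) := fun τ v => MvPolynomial.eval τ (t.update v) with hF
  -- update polynomials of program variables only mention program variables
  have hupdPV : ∀ v ∈ PV, ↑(t.update v).vars ⊆ PV := by
    intro v hv
    by_cases hv' : v ∈ PV'
    · exact (hupd v hv').trans hPV'
    · rw [hupdId v hv hv']
      intro w hw
      have : w ∈ (MvPolynomial.X (R := ℤ) v).vars := hw
      rw [MvPolynomial.vars_X] at this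
      rw [Finset.mem_singleton] at this
      subst this; exact hv
  -- the chain lemma
  have chainLem : ∀ (m : ℕ) (σ : V → ℤ) (c' : Config L V),
      relPow (Step PV t) m (t.src, σ) c' →
      (∀ v ∈ PV, c'.2 v = F^[m] σ v) ∧ ∀ i < m, t.guard.holds (F^[i] σ) := by
    intro m
    induction m with
    | zero =>
        intro σ c' h
        cases h
        exact ⟨fun v _ => rfl, fun i hi => absurd hi (Nat.not_lt_zero i)⟩
    | succ m ih =>
        intro σ c' h
        obtain ⟨mid, hmid, hstep⟩ := h
        obtain ⟨hagree, hguards⟩ := ih σ mid hmid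
        obtain ⟨_, _, hg, hupd'⟩ := hstep
        have hagree' : ∀ v ∈ PV, c'.2 v = F^[m + 1] σ v := by
          intro v hv
          rw [Function.iterate_succ_apply']
          rw [hupd' v hv]
          exact eval_congr_vars _ _ _ fun w hw => hagree w (hupdPV v hv hw)
        refine ⟨hagree', ?_⟩
        intro i hi
        rcases Nat.lt_succ_iff_lt_or_eq.mp hi with hi' | hi'
        · exact hguards i hi'
        · subst hi'
          exact (holds_congr_vars t.guard mid.2 (F^[i] σ)
            fun v hv => hagree v (hPV' (hguard hv))).mp hg
  -- main argument
  intro t' ht' r' hr' σ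
  rw [Finset.mem_singleton] at ht'
  rw [ht']
  by_cases hrr : r' = r
  · subst hrr
    simp only [if_pos rfl]
    refine iSup₂_le ?_
    intro k hk
    obtain ⟨σ₀, c', hreach, hpow⟩ := hk
    have hψ : ψ.holds σ := hψreach σ₀ σ hreach
    have hsrc : t.src = r'.tgt := by
      obtain ⟨_, _, t'', ht'', hsrc⟩ := hr'
      rw [Finset.mem_singleton] at ht''
      subst ht''; exact hsrc
    rcases Nat.eq_zero_or_pos k with hk0 | hkpos
    · subst hk0; simp
    · obtain ⟨m, hkm, hm⟩ := relPow_starThen_singleton k _ _ hpow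
      rw [← hsrc] at hm
      obtain ⟨_, hguards⟩ := chainLem m σ c' hm
      have hgσ : t.guard.holds σ := by
        have := hguards 0 (lt_of_lt_of_le hkpos hkm)
        simpa using this
      have hkmem : k ∈ {k : ℕ |
          ∀ i < k, t.guard.holds ((fun τ v => MvPolynomial.eval τ (t.update v))^[i] σ)} :=
        fun i hi => hguards i (lt_of_lt_of_le hi hkm)
      calc (k : ℕ∞) ≤ ⨆ k ∈ {k : ℕ |
            ∀ i < k, t.guard.holds ((fun τ v => MvPolynomial.eval τ (t.update v))^[i] σ)},
            (k : ℕ∞) := le_iSup₂_of_le k hkmem le_rfl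
        _ ≤ b.eval (absState σ) := hb σ hψ hgσ
  · simp only [if_neg hrr]
    exact le_top

end Koat
end
end

section
/- Let P = (PV, L, ℓ0, T) be an integer program and let C = {t1,...,tn} ⊂ T be a simple cycle: no transition of C contains temporary variables, and there are pairwise different locations ℓ1,...,ℓn with t_i = (ℓ_i, _, _, ℓ_{i+1}) for 1 ≤ i ≤ n−1 and t_n = (ℓ_n, _, _, ℓ1). For each entry transition r ∈ E_C whose target location is ℓ_i, let t = t_i ⋆ ... ⋆ t_n ⋆ t_1 ⋆ ... ⋆ t_{i−1} be the chained transition (a self-loop at ℓ_i). Suppose that for some entry transitions r we have a bound b_r ∈ B with |σ|(b_r) ≥ sup{k ∈ ℕ : ∃σ0, σ', (ℓ0,σ0) →*_T ∘ →_r (ℓ_i,σ) →_t^k (ℓ_i,σ')} for all states σ. Then RBloc : E_C → B defined by RBloc(r) = 1 + b_r for those r and RBloc(r) = ω for all other entry transitions is a local runtime bound for C = T'_> = T' in P. -/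
open scoped Classical

noncomputable section

namespace MvPolynomial

variable {R σ τ : Type*} [CommSemiring R]

theorem eval_congr_of_vars {p : MvPolynomial σ R} {x y : σ → R}
    (h : ∀ v ∈ p.vars, x v = y v) : eval x p = eval y p :=
  eval₂Hom_congr' rfl (fun v hv _ => h v hv) rfl

theorem eval_bind₁ (η : σ → MvPolynomial τ R) (x : τ → R) (p : MvPolynomial σ R) :
    eval x (bind₁ η p) = eval (fun v => eval x (η v)) p :=
  eval₂Hom_bind₁ _ _ _ _

end MvPolynomial

namespace List

variable {α : Type*}

def getMod (l : List α) (hl : 0 < l.length) (p : ℕ) : α :=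
  l[p % l.length]'(Nat.mod_lt _ hl)

theorem getMod_of_lt {l : List α} (hl : 0 < l.length) {p : ℕ} (hp : p < l.length) :
    l.getMod hl p = l[p] := by
  simp [getMod, Nat.mod_eq_of_lt hp]

theorem getMod_congr {l : List α} (hl : 0 < l.length) {p q : ℕ} (h : p ≡ q [MOD l.length]) :
    l.getMod hl p = l.getMod hl q := by
  simp only [getMod, show p % l.length = q % l.length from h]

theorem map_getMod_range' (l : List α) (hl : 0 < l.length) (p : ℕ) :
    (range' p l.length).map (l.getMod hl) = l.rotate p := by
  refine ext_getElem (by simp) fun k _ _ => ?_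
  simp [getMod, getElem_rotate, Nat.add_comm]

theorem modEq_of_getMod_eq {β : Type*} {f : α → β} {l : List α} (hl : 0 < l.length)
    (hf : (l.map f).Nodup) {p q : ℕ} (h : f (l.getMod hl p) = f (l.getMod hl q)) :
    p ≡ q [MOD l.length] :=
  (hf.getElem_inj_iff (hi := by simpa using Nat.mod_lt p hl)
    (hj := by simpa using Nat.mod_lt q hl)).1 (by simpa [getMod] using h)

theorem eq_getMod_of_apply_eq {β : Type*} {f : α → β} {l : List α} (hl : 0 < l.length)
    (hf : (l.map f).Nodup) {u : α} (hu : u ∈ l) {q : ℕ} (h : f u = f (l.getMod hl q)) :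
    u = l.getMod hl q := by
  obtain ⟨a, ha, rfl⟩ := getElem_of_mem hu
  rw [← getMod_of_lt hl ha] at h ⊢
  exact getMod_congr hl (modEq_of_getMod_eq hl hf h)

theorem IsChain.rel_getMod_succ {R : α → α → Prop} {l : List α} (hc : IsChain R l)
    (hne : l ≠ []) (hlast : R (l.getLast hne) (l.head hne)) (hl : 0 < l.length) (p : ℕ) :
    R (l.getMod hl p) (l.getMod hl (p + 1)) := by
  have hp := Nat.mod_lt p hl
  have hsucc : (p + 1) % l.length = (p % l.length + 1) % l.length := (Nat.mod_add_mod _ _ _).symm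
  unfold getMod
  rcases Nat.lt_or_ge (p % l.length + 1) l.length with hlt | hge
  · simp only [hsucc, Nat.mod_eq_of_lt hlt]
    exact isChain_iff_getElem.1 hc _ hlt
  · have hwrap : p % l.length = l.length - 1 := by omega
    simp only [hsucc, hwrap, Nat.sub_add_cancel hl, Nat.mod_self]
    simpa [getLast_eq_getElem, head_eq_getElem] using hlast

end List

namespace Koat

namespace Fml

variable {V : Type*}

theorem holds_congr {σ σ' : V → ℤ} :
    ∀ {f : Fml V}, (∀ v ∈ f.vars, σ v = σ' v) → (f.holds σ ↔ f.holds σ')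
  | .lt p q, h => by
      simp only [vars, Finset.mem_union] at h
      simp only [holds, MvPolynomial.eval_congr_of_vars fun v hv => h v (.inl hv),
        MvPolynomial.eval_congr_of_vars fun v hv => h v (.inr hv)]
  | .and f g, h | .or f g, h => by
      simp only [vars, Finset.mem_union] at h
      simp only [holds, holds_congr fun v hv => h v (.inl hv),
        holds_congr fun v hv => h v (.inr hv)]

theorem holds_subst (η : V → MvPolynomial V ℤ) (σ : V → ℤ) :
    ∀ f : Fml V, (f.subst η).holds σ ↔ f.holds fun v => MvPolynomial.eval σ (η v)
  | .lt p q => by simp [subst, holds, MvPolynomial.eval_bind₁]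
  | .and f g | .or f g => by simp [subst, holds, holds_subst η σ f, holds_subst η σ g]

theorem mem_vars_subst {η : V → MvPolynomial V ℤ} {x : V} :
    ∀ {f : Fml V}, x ∈ (f.subst η).vars → ∃ v ∈ f.vars, x ∈ (η v).vars
  | .lt p q, h => by
      simp only [subst, vars, Finset.mem_union] at h ⊢
      rcases h with h | h <;> obtain ⟨v, hv, hx⟩ := MvPolynomial.mem_vars_bind₁ _ _ h
      exacts [⟨v, .inl hv, hx⟩, ⟨v, .inr hv, hx⟩]
  | .and f g, h | .or f g, h => by
      simp only [subst, vars, Finset.mem_union] at h ⊢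
      rcases h with h | h <;> obtain ⟨v, hv, hx⟩ := mem_vars_subst h
      exacts [⟨v, .inl hv, hx⟩, ⟨v, .inr hv, hx⟩]

end Fml

section Chaining

variable {L V : Type*} {PV : Set V}

def Trans.NoTempVars (PV : Set V) (t : Trans L V) : Prop :=
  ↑t.guard.vars ⊆ PV ∧ ∀ v ∈ PV, ↑(t.update v).vars ⊆ PV

theorem Trans.NoTempVars.chain2 {t₁ t₂ : Trans L V} (h₁ : t₁.NoTempVars PV)
    (h₂ : t₂.NoTempVars PV) : (chain2 t₁ t₂).NoTempVars PV := by
  have hbind : ∀ p : MvPolynomial V ℤ, ↑p.vars ⊆ PV →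
      ↑(MvPolynomial.bind₁ t₁.update p).vars ⊆ PV := fun p hp x hx => by
    obtain ⟨v, hv, hx⟩ := MvPolynomial.mem_vars_bind₁ _ _ hx
    exact h₁.2 v (hp hv) hx
  refine ⟨fun x hx => ?_, fun v hv => hbind _ (h₂.2 v hv)⟩
  simp only [Koat.chain2, Fml.vars, Finset.coe_union, Set.mem_union, Finset.mem_coe] at hx
  rcases hx with hx | hx
  · exact h₁.1 hx
  · obtain ⟨v, hv, hx⟩ := Fml.mem_vars_subst hx
    exact h₁.2 v (h₂.1 hv) hx

theorem Step.chain2 {t₁ t₂ : Trans L V} (h₂ : t₂.NoTempVars PV) {c c₁ c₂ : Config L V}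
    (s₁ : Step PV t₁ c c₁) (s₂ : Step PV t₂ c₁ c₂) : Step PV (chain2 t₁ t₂) c c₂ := by
  obtain ⟨hsrc, -, hg₁, hu₁⟩ := s₁
  obtain ⟨-, htgt, hg₂, hu₂⟩ := s₂
  refine ⟨hsrc, htgt, ⟨hg₁, ?_⟩, fun v hv => ?_⟩
  · rw [Fml.holds_subst]
    exact (Fml.holds_congr fun v hv => hu₁ v (h₂.1 hv)).1 hg₂
  · rw [hu₂ v hv]
    exact (MvPolynomial.eval_congr_of_vars fun w hw => hu₁ w (h₂.2 v hv hw)).trans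
      (MvPolynomial.eval_bind₁ _ _ _).symm

theorem step_foldl_chain2 :
    ∀ {l : List (Trans L V)} {t : Trans L V}, t.NoTempVars PV → (∀ u ∈ l, u.NoTempVars PV) →
      ∀ {c c' : Config L V}, stepsList PV (t :: l) c c' → Step PV (l.foldl chain2 t) c c'
  | [], _, _, _, _, _, ⟨_, h, rfl⟩ => h
  | u :: _, _, ht, hl, _, _, ⟨_, h₁, _, h₂, h₃⟩ =>
      step_foldl_chain2 (ht.chain2 (hl u List.mem_cons_self))
        (fun w hw => hl w (List.mem_cons_of_mem u hw))
        ⟨_, h₁.chain2 (hl u List.mem_cons_self) h₂, h₃⟩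

end Chaining

section RelPow

variable {α : Type*} {R : α → α → Prop}

theorem relPow_add (a : ℕ) :
    ∀ (b : ℕ) {x z : α}, relPow R (a + b) x z ↔ ∃ y, relPow R a x y ∧ relPow R b y z
  | 0, _, _ => ⟨fun h => ⟨_, h, rfl⟩, fun ⟨_, h, hz⟩ => hz ▸ h⟩
  | b + 1, _, _ => by
      change (∃ w, relPow R (a + b) _ w ∧ R w _) ↔ _
      simp only [relPow_add a b]
      exact ⟨fun ⟨w, ⟨y, hy, hw⟩, h⟩ => ⟨y, hy, w, hw, h⟩,
        fun ⟨y, hy, w, hw, h⟩ => ⟨w, ⟨y, hy, hw⟩, h⟩⟩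

theorem relPow_succ' {n : ℕ} {x z : α} : relPow R (n + 1) x z ↔ ∃ y, R x y ∧ relPow R n y z := by
  rw [Nat.add_comm, relPow_add]
  exact ⟨fun ⟨y, ⟨_, rfl, h⟩, hn⟩ => ⟨y, h, hn⟩, fun ⟨y, h, hn⟩ => ⟨y, ⟨x, rfl, h⟩, hn⟩⟩

theorem exists_relPow_of_reflTransGen {x z : α} (h : Relation.ReflTransGen R x z) :
    ∃ n, relPow R n x z := by
  induction h with
  | refl => exact ⟨0, rfl⟩
  | tail _ hstep ih => obtain ⟨n, hn⟩ := ih; exact ⟨n + 1, _, hn, hstep⟩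

end RelPow

section ForcedRuns

variable {L V : Type*} {PV : Set V} {C : Finset (Trans L V)} {w : ℕ → Trans L V}

theorem stepsList_of_relPow_stepAny (hw : ∀ q, (w q).tgt = (w (q + 1)).src)
    (hdet : ∀ u ∈ C, ∀ q, u.src = (w q).src → u = w q) :
    ∀ {m q : ℕ} {c c' : Config L V}, c.1 = (w q).src → relPow (StepAny PV C) m c c' →
      stepsList PV ((List.range' q m).map w) c c' ∧ c'.1 = (w (q + m)).src
  | 0, _, _, _, hc, rfl => ⟨rfl, hc⟩
  | m + 1, q, c, c', hc, h => by
      obtain ⟨y, ⟨u, hu, hstep⟩, hrest⟩ := relPow_succ'.1 h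
      obtain rfl := hdet u hu q (hstep.1.symm.trans hc)
      have ih := stepsList_of_relPow_stepAny hw hdet (hstep.2.1.trans (hw q)) hrest
      rw [List.range'_succ, List.map_cons, ← Nat.add_assoc, Nat.add_right_comm]
      exact ⟨⟨y, hstep, ih.1⟩, ih.2⟩

theorem exists_relPow_stepAny_of_starThen (hw : ∀ q, (w q).tgt = (w (q + 1)).src)
    (hdet : ∀ u ∈ C, ∀ q, u.src = (w q).src → u = w q) {t : Trans L V} (ht : t ∈ C) {q : ℕ}
    {c c' : Config L V} (hc : c.1 = (w q).src) (h : starThen PV C t c c') :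
    ∃ m, (w (q + m)).src = t.src ∧ relPow (StepAny PV C) (m + 1) c c' := by
  obtain ⟨c₁, hrun, hstep⟩ := h
  obtain ⟨m, hm⟩ := exists_relPow_of_reflTransGen hrun
  exact ⟨m, (stepsList_of_relPow_stepAny hw hdet hc hm).2.symm.trans hstep.1,
    c₁, hm, t, ht, hstep⟩

theorem exists_relPow_stepAny_of_relPow_starThen (hw : ∀ q, (w q).tgt = (w (q + 1)).src)
    (hdet : ∀ u ∈ C, ∀ q, u.src = (w q).src → u = w q) {n : ℕ}
    (hsrc : ∀ p q, (w p).src = (w q).src → p ≡ q [MOD n]) {j : ℕ} (hj : w j ∈ C) :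
    ∀ (k : ℕ) {q : ℕ} {c c' : Config L V}, c.1 = (w q).src →
      relPow (starThen PV C (w j)) (k + 1) c c' → ∃ m, k * n < m ∧ relPow (StepAny PV C) m c c'
  | 0, _, _, _, hc, ⟨_, rfl, h⟩ => by
      obtain ⟨m, -, hm⟩ := exists_relPow_stepAny_of_starThen hw hdet hj hc h
      exact ⟨m + 1, by omega, hm⟩
  | k + 1, _, _, _, hc, ⟨c₁, h₁, h⟩ => by
      obtain ⟨m₁, hkm₁, hm₁⟩ := exists_relPow_stepAny_of_relPow_starThen hw hdet hsrc hj k hc h₁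
      obtain ⟨_, _, _, _, hlast⟩ := h₁
      obtain ⟨m₂, hpos, hm₂⟩ :=
        exists_relPow_stepAny_of_starThen hw hdet hj (hlast.2.1.trans (hw j)) h
      -- the run from `(w j).tgt` back to `w j` is a whole number of rounds
      have hround : n ∣ m₂ + 1 :=
        (Nat.add_modEq_left_iff (a := j)).1 (by
          rw [← Nat.add_assoc, Nat.add_right_comm]; exact hsrc _ _ hpos)
      refine ⟨m₁ + (m₂ + 1), ?_, (relPow_add _ _).2 ⟨c₁, hm₁, hm₂⟩⟩
      have := Nat.le_of_dvd (Nat.succ_pos m₂) hround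
      rw [Nat.succ_mul]
      omega

end ForcedRuns

section CycleRuns

variable {L V : Type*} {PV : Set V} {C : Finset (Trans L V)} {ts : List (Trans L V)}
  (hn : 0 < ts.length)

theorem relPow_chainFold_rotate_of_relPow_stepAny
    (hw : ∀ q, (ts.getMod hn q).tgt = (ts.getMod hn (q + 1)).src)
    (hdet : ∀ u ∈ C, ∀ q, u.src = (ts.getMod hn q).src → u = ts.getMod hn q)
    (hclean : ∀ u ∈ ts, u.NoTempVars PV) (d : Trans L V) {q : ℕ} :
    ∀ (k : ℕ) {c c' : Config L V}, c.1 = (ts.getMod hn q).src →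
      relPow (StepAny PV C) (k * ts.length) c c' →
      relPow (Step PV (chainFold d (ts.rotate q))) k c c' ∧ c'.1 = c.1
  | 0, _, _, _, h => by
      rw [Nat.zero_mul] at h
      exact ⟨h, h ▸ rfl⟩
  | k + 1, c, c', hc, h => by
      rw [Nat.succ_mul] at h
      obtain ⟨c₁, h₁, h₂⟩ := (relPow_add _ _).1 h
      obtain ⟨hloop, hc₁⟩ := relPow_chainFold_rotate_of_relPow_stepAny hw hdet hclean d k hc h₁
      have hround := stepsList_of_relPow_stepAny hw hdet (hc₁.trans hc) h₂
      rw [List.map_getMod_range', List.getMod_congr hn (Nat.add_modEq_left_iff.2 dvd_rfl)] at hround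
      obtain ⟨hd, tl, hcons⟩ := List.exists_cons_of_ne_nil
        (List.rotate_eq_nil_iff.not.2 (List.ne_nil_of_length_pos hn))
      have hclean' : ∀ u ∈ hd :: tl, u.NoTempVars PV := fun u hu =>
        hclean u (List.mem_rotate.1 (hcons ▸ hu))
      rw [hcons] at hround hloop ⊢
      exact ⟨⟨c₁, hloop, step_foldl_chain2 (hclean' hd List.mem_cons_self)
        (fun u hu => hclean' u (List.mem_cons_of_mem hd hu)) hround.1⟩, hround.2.trans hc.symm⟩

theorem exists_relPow_chainFold_rotate_of_relPow_starThen
    (hw : ∀ q, (ts.getMod hn q).tgt = (ts.getMod hn (q + 1)).src)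
    (hdet : ∀ u ∈ C, ∀ q, u.src = (ts.getMod hn q).src → u = ts.getMod hn q)
    (hsrc : ∀ p q, (ts.getMod hn p).src = (ts.getMod hn q).src → p ≡ q [MOD ts.length])
    (hclean : ∀ u ∈ ts, u.NoTempVars PV) (d : Trans L V) {j : ℕ} (hj : ts.getMod hn j ∈ C)
    (k : ℕ) {q : ℕ} {c c' : Config L V} (hc : c.1 = (ts.getMod hn q).src)
    (h : relPow (starThen PV C (ts.getMod hn j)) (k + 1) c c') :
    ∃ c₁ : Config L V, relPow (Step PV (chainFold d (ts.rotate q))) k c c₁ ∧ c₁.1 = c.1 := by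
  obtain ⟨m, hkm, hm⟩ := exists_relPow_stepAny_of_relPow_starThen hw hdet hsrc hj k hc h
  obtain ⟨c₁, hc₁, -⟩ :=
    (relPow_add (k * ts.length) (m - k * ts.length)).1 (by rwa [Nat.add_sub_cancel' hkm.le])
  exact ⟨c₁, relPow_chainFold_rotate_of_relPow_stepAny hn hw hdet hclean d k hc hc₁⟩

end CycleRuns

theorem local_bound_for_twn_cycle_general {L V : Type*}
    (PV : Set V)
    (ℓ₀ : L) (T : Finset (Trans L V))
    (ts : List (Trans L V)) (hne : ts ≠ [])
    (hlocsNodup : (ts.map Trans.src).Nodup)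
    (hloc : List.Chain' (fun t₁ t₂ => t₁.tgt = t₂.src) ts)
    (hcycle : (ts.getLast hne).tgt = (ts.head hne).src)
    (hnotemp : ∀ t ∈ ts, ↑t.guard.vars ⊆ PV ∧ (∀ v ∈ PV, ↑(t.update v).vars ⊆ PV) ∧
      ∀ v ∉ PV, t.update v = MvPolynomial.X v)
    (S : Set (Trans L V))
    (bR : Trans L V → Bnd V)
    (hb : ∀ r ∈ S, ∃ i : Fin ts.length, (ts.get i).src = r.tgt ∧
      ∀ σ : V → ℤ,
        (⨆ k ∈ {k : ℕ | ∃ σ₀ σ' : V → ℤ,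
            starThen PV T r (ℓ₀, σ₀) (r.tgt, σ) ∧
            relPow (Step PV (chainFold r (ts.rotate i))) k (r.tgt, σ) (r.tgt, σ')},
          (k : ℕ∞)) ≤ (bR r).eval (absState σ)) :
    IsLocalRB PV ℓ₀ T ts.toFinset ts.toFinset
      (fun r => if r ∈ S then (Bnd.const 1).add (bR r) else .const ⊤) := by
  have hn : 0 < ts.length := List.length_pos_iff.2 hne
  set w := ts.getMod hn
  have hw : ∀ q, (w q).tgt = (w (q + 1)).src := hloc.rel_getMod_succ hne hcycle hn
  have hsrc : ∀ p q, (w p).src = (w q).src → p ≡ q [MOD ts.length] :=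
    fun _ _ => List.modEq_of_getMod_eq hn hlocsNodup
  have hdet : ∀ u ∈ ts.toFinset, ∀ q, u.src = (w q).src → u = w q := fun u hu _ =>
    List.eq_getMod_of_apply_eq hn hlocsNodup (List.mem_toFinset.1 hu)
  intro t ht r _ σ
  by_cases hrS : r ∈ S
  swap
  · simp only [if_neg hrS]
    exact le_top
  obtain ⟨i, hi, hbound⟩ := hb r hrS
  simp only [if_pos hrS]
  refine iSup₂_le fun k ⟨σ₀, c', hentry, hrun⟩ => ?_
  obtain _ | k := k
  · simp
  obtain ⟨j, hj, rfl⟩ := List.getElem_of_mem (List.mem_toFinset.1 ht)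
  rw [← List.getMod_of_lt hn hj] at ht hrun
  have hr : (r.tgt, σ).1 = (w i).src := by simpa [w, List.getMod_of_lt hn i.isLt] using hi.symm
  obtain ⟨⟨ℓ₁, σ₁⟩, hloop, rfl : ℓ₁ = r.tgt⟩ :=
    exists_relPow_chainFold_rotate_of_relPow_starThen hn hw hdet hsrc
      (fun u hu => ⟨(hnotemp u hu).1, (hnotemp u hu).2.1⟩) r ht k hr hrun
  have hk : (k : ℕ∞) ≤ (bR r).eval (absState σ) := by
    refine (le_biSup (fun k : ℕ => (k : ℕ∞)) ?_).trans (hbound σ)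
    exact ⟨σ₀, σ₁, hentry, hloop⟩
  calc ((k + 1 : ℕ) : ℕ∞) = 1 + k := by push_cast; ring
    _ ≤ 1 + (bR r).eval (absState σ) := by gcongr

/-- correctness of the algorithm for twn-cycles, Thm. 23 of the paper:
for a simple cycle `C = {t₁,…,tₙ}`, bounds `b_r` on the number of executions of the
chained self-loop (obtained by chaining the cycle starting after the entry transition `r`)
yield, after adding `1`, a local runtime bound for `C = T'_> = T'`. -/
theorem local_bound_for_twn_cycle {L V : Type*} [Finite L]
    (PV : Set V) (hPVfin : PV.Finite)
    (ℓ₀ : L) (T : Finset (Trans L V)) (hnoIncoming : ∀ t' ∈ T, t'.tgt ≠ ℓ₀)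
    (ts : List (Trans L V)) (hne : ts ≠ [])
    (hsub : ts.toFinset ⊂ T)
    (hlocsNodup : (ts.map Trans.src).Nodup)
    (hloc : List.Chain' (fun t₁ t₂ => t₁.tgt = t₂.src) ts)
    (hcycle : (ts.getLast hne).tgt = (ts.head hne).src)
    (hnotemp : ∀ t ∈ ts, ↑t.guard.vars ⊆ PV ∧ (∀ v ∈ PV, ↑(t.update v).vars ⊆ PV) ∧
      ∀ v ∉ PV, t.update v = MvPolynomial.X v)
    (S : Set (Trans L V)) (hS : S ⊆ entrySet T ts.toFinset)
    (bR : Trans L V → Bnd V)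
    (hb : ∀ r ∈ S, ∃ i : Fin ts.length, (ts.get i).src = r.tgt ∧
      ∀ σ : V → ℤ,
        (⨆ k ∈ {k : ℕ | ∃ σ₀ σ' : V → ℤ,
            starThen PV T r (ℓ₀, σ₀) (r.tgt, σ) ∧
            relPow (Step PV (chainFold r (ts.rotate i))) k (r.tgt, σ) (r.tgt, σ')},
          (k : ℕ∞)) ≤ (bR r).eval (absState σ)) :
    IsLocalRB PV ℓ₀ T ts.toFinset ts.toFinset
      (fun r => if r ∈ S then (Bnd.const 1).add (bR r) else .const ⊤) :=
  local_bound_for_twn_cycle_general PV ℓ₀ T ts hne hlocsNodup hloc hcycle hnotemp S bR hb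

end Koat
end
end

section
/- Let t1,...,tn be transitions without temporary variables (all guards and updates only involve program variables), with t_i = (ℓ_i, φ_i, η_i, ℓ_{i+1}) for 1 ≤ i ≤ n, so that the target location of t_i is the start location of t_{i+1}. Then for all states σ, σ': there is an evaluation (ℓ1, σ) →_{t1} ∘ →_{t2} ∘ ... ∘ →_{tn} (ℓ_{n+1}, σ') if and only if (ℓ1, σ) →_{t1 ⋆ ... ⋆ tn} (ℓ_{n+1}, σ'), where t1 ⋆ ... ⋆ tn is the chained transition. In particular, chaining exactly captures the composed evaluation relation of the sequence of transitions. -/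
open scoped Classical

noncomputable section

namespace Koat

/-!
Without temporary variables a step by `(ℓ, φ, η, ℓ')` is deterministic: it maps `σ` to `σ ∘ η`
when `σ ⊨ φ`. Two consecutive steps by `t₁`, `t₂` therefore amount to `σ ⊨ φ₁`,
`σ ∘ η₁ ⊨ φ₂` (i.e. `σ ⊨ η₁(φ₂)`) and `σ' = σ ∘ η₁ ∘ η₂`, which is one step by `t₁ ⋆ t₂`.
Folding the list from the left then chains one transition at a time.
-/

theorem _root_.MvPolynomial.eval_bind₁_s16 {R σ τ : Type*} [CommSemiring R] (x : τ → R)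
    (f : σ → MvPolynomial τ R) (p : MvPolynomial σ R) :
    MvPolynomial.eval x (MvPolynomial.bind₁ f p) =
      MvPolynomial.eval (fun i => MvPolynomial.eval x (f i)) p :=
  MvPolynomial.eval₂Hom_bind₁ _ _ _ _

theorem Fml.holds_subst_s16 {V : Type*} (σ : V → ℤ) (η : V → MvPolynomial V ℤ) (f : Fml V) :
    (f.subst η).holds σ ↔ f.holds (fun v => MvPolynomial.eval σ (η v)) := by
  induction f with
  | lt p q => simp only [Fml.subst, Fml.holds, MvPolynomial.eval_bind₁_s16]
  | and f g ihf ihg => simp only [Fml.subst, Fml.holds, ihf, ihg]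
  | or f g ihf ihg => simp only [Fml.subst, Fml.holds, ihf, ihg]

theorem step_univ_iff {L V : Type*} {t : Trans L V} {c c' : Config L V} :
    Step Set.univ t c c' ↔
      c.1 = t.src ∧ t.guard.holds c.2 ∧
        c' = (t.tgt, fun v => MvPolynomial.eval c.2 (t.update v)) := by
  simp only [Step, Set.mem_univ, true_implies, Prod.ext_iff, funext_iff]
  tauto

theorem comp_step_step_eq_step_chain2 {L V : Type*} {t₁ t₂ : Trans L V}
    (h : t₁.tgt = t₂.src) :
    Relation.Comp (Step Set.univ t₁) (Step Set.univ t₂) = Step Set.univ (chain2 t₁ t₂) := by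
  ext c c'
  simp only [Relation.Comp, step_univ_iff, chain2, Fml.holds, Fml.holds_subst_s16,
    MvPolynomial.eval_bind₁_s16, h]
  constructor
  · rintro ⟨_, ⟨hsrc, hg₁, rfl⟩, -, hg₂, rfl⟩
    exact ⟨hsrc, ⟨hg₁, hg₂⟩, rfl⟩
  · rintro ⟨hsrc, ⟨hg₁, hg₂⟩, rfl⟩
    exact ⟨_, ⟨hsrc, hg₁, rfl⟩, rfl, hg₂, rfl⟩

theorem stepsList_cons_cons_univ {L V : Type*} {t₁ t₂ : Trans L V} (ts : List (Trans L V))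
    (h : t₁.tgt = t₂.src) :
    stepsList Set.univ (t₁ :: t₂ :: ts) = stepsList Set.univ (chain2 t₁ t₂ :: ts) := by
  rw [stepsList, stepsList, stepsList, ← Relation.comp_assoc, comp_step_step_eq_step_chain2 h]

/-- chaining exactly captures the composed evaluation relation:
`(ℓ₁,σ) →_{t₁} ∘ ⋯ ∘ →_{tₙ} (ℓ_{n+1},σ')` iff `(ℓ₁,σ) →_{t₁ ⋆ ⋯ ⋆ tₙ} (ℓ_{n+1},σ')`
(all variables are program variables, i.e. there are no temporary variables). -/
theorem chaining_captures_composition {L V : Type*}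
    (t : Trans L V) (ts : List (Trans L V))
    (hloc : List.Chain' (fun t₁ t₂ => t₁.tgt = t₂.src) (t :: ts)) :
    ∀ c c' : Config L V,
      stepsList (Set.univ : Set V) (t :: ts) c c' ↔
        Step (Set.univ : Set V) (ts.foldl chain2 t) c c' := by
  induction ts generalizing t with
  | nil => simp only [stepsList, Relation.comp_eq, List.foldl_nil, implies_true]
  | cons t₂ ts ih =>
    -- `(chain2 t t₂).tgt` is `t₂.tgt` by definition, so the tail of `hloc` transfers.
    have hchain : List.IsChain (fun t₁ t₂ => t₁.tgt = t₂.src) (chain2 t t₂ :: ts) :=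
      List.isChain_cons.mpr (List.isChain_cons.mp hloc.tail)
    rw [stepsList_cons_cons_univ ts (List.isChain_cons_cons.mp hloc).1]
    exact ih _ hchain

end Koat
end
end
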